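/- arXiv:1910.02473 — 3 statements merged into one kernel-verified Lean document; each statement's English description precedes it below -/
import Mathlib

section
/- Let F be a field of characteristic not 2, and let φ and γ be anisotropic Pfister forms over F (of fold m and n respectively) with pure subforms φ' and γ'. Then φ and γ share a common quadratic splitting field if and only if the quadratic form γ' ⊥ (-1)·φ' is isotropic over F. -/
open Polynomial QuadraticMap

/-- The Pfister form `⟨⟨a₁,…,aₘ⟩⟩` as a diagonal form indexed by subsets of `{1,…,m}`. -/
noncomputable def pfisterForm (K : Type*) [CommRing K] {m : ℕ} (a : Fin m → K) :
    QuadraticMap K (Finset (Fin m) → K) K :=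
  weightedSumSquares K (fun S : Finset (Fin m) => ∏ i ∈ S, (-a i))

/-- The diagonal coefficients of the pure subform `φ'` (nonempty subsets). -/
def pfisterPureCoeff (K : Type*) [CommRing K] {m : ℕ} (a : Fin m → K) :
    {S : Finset (Fin m) // S.Nonempty} → K :=
  fun S => ∏ i ∈ S.1, (-a i)

/-- A quadratic form on `ι → K` is hyperbolic if it is equivalent to
`⟨1, -1⟩ ⊥ ⋯ ⊥ ⟨1, -1⟩`. -/
noncomputable def IsHyperbolic {K ι : Type*} [CommRing K] [Fintype ι]
    (q : QuadraticMap K (ι → K) K) : Prop :=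
  ∃ k : ℕ, QuadraticMap.Equivalent q
    (weightedSumSquares K (Sum.elim (fun _ : Fin k => (1 : K)) (fun _ : Fin k => (-1 : K))))

/-!
Both sides say that `φ'` and `γ'` represent a common value `-c` with `c` not a square.

If `φ' z = -c`, then `√c ⊕ z` is an isotropic vector of `φ = ⟨1⟩ ⊥ φ'` over `F(√c)`, and an
isotropic Pfister form is hyperbolic: writing `φ = ψ ⊥ tψ`, either `ψ` is isotropic (induction),
or an isotropic vector gives values `p = -tq` of `ψ`, and roundness of `ψ` turns `ψ ⊥ tψ` into
`pψ ⊥ -pψ`.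

Conversely, an isotropic vector `x + √c y` of `φ` over `F(√c)` gives `x ⊥ y` with
`φ x = -c φ y`. Since `φ` is round, a similarity `φ y • φ ≅ φ` carries `(x, y)` to orthogonal
vectors of values `-c` and `1`, and an isometry of `φ` (a product of reflections) moves the
latter onto the basis vector `e_∅`; the image of the former is then a vector of `φ'`.
-/

namespace QuadraticMap

section CommRing

variable {R V V₁ V₂ : Type*} [CommRing R] [AddCommGroup V] [Module R V]
  [AddCommGroup V₁] [Module R V₁] [AddCommGroup V₂] [Module R V₂]

theorem map_sub_eq (Q : QuadraticForm R V) (x y : V) :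
    Q (x - y) = Q x + Q y - polar Q x y := by
  rw [sub_eq_add_neg, QuadraticMap.map_add Q, QuadraticMap.map_neg, polar_neg_right,
    sub_eq_add_neg]

theorem IsometryEquiv.polar_map {Q₁ : QuadraticForm R V₁} {Q₂ : QuadraticForm R V₂}
    (f : Q₁.IsometryEquiv Q₂) (x y : V₁) : polar Q₂ (f x) (f y) = polar Q₁ x y := by
  simp only [polar, ← map_add, f.map_app]

theorem Equivalent.anisotropic_iff {Q₁ : QuadraticForm R V₁} {Q₂ : QuadraticForm R V₂}
    (h : Q₁.Equivalent Q₂) : Q₁.Anisotropic ↔ Q₂.Anisotropic := by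
  obtain ⟨f⟩ := h
  refine ⟨fun h₁ y hy => ?_, fun h₂ x hx => ?_⟩
  · simpa using h₁ (f.symm y) (by rwa [f.symm.map_app])
  · simpa using h₂ (f x) (by rwa [f.map_app])

theorem Equivalent.smul {Q₁ : QuadraticForm R V₁} {Q₂ : QuadraticForm R V₂}
    (h : Q₁.Equivalent Q₂) (c : R) : (c • Q₁).Equivalent (c • Q₂) :=
  let ⟨f⟩ := h
  ⟨{ f.toLinearEquiv with map_app' := fun x => by simp [f.map_app] }⟩

theorem smul_prod (c : R) (Q₁ : QuadraticForm R V₁) (Q₂ : QuadraticForm R V₂) :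
    c • Q₁.prod Q₂ = (c • Q₁).prod (c • Q₂) := by
  ext
  simp [mul_add]

variable {ι κ ι₁ ι₂ : Type*} [Fintype ι] [Fintype κ] [Fintype ι₁] [Fintype ι₂]

theorem weightedSumSquares_equivalent_comp (w : ι → R) (e : κ ≃ ι) :
    (weightedSumSquares R w).Equivalent (weightedSumSquares R (w ∘ e)) :=
  ⟨{ LinearEquiv.funCongrLeft R R e with
      map_app' := fun v => by
        simp only [weightedSumSquares_apply]
        exact e.sum_comp fun i => w i • (v i * v i) }⟩

theorem weightedSumSquares_sumElim_equivalent (w₁ : ι₁ → R) (w₂ : ι₂ → R) :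
    (weightedSumSquares R (Sum.elim w₁ w₂)).Equivalent
      ((weightedSumSquares R w₁).prod (weightedSumSquares R w₂)) :=
  ⟨{ LinearEquiv.sumArrowLequivProdArrow ι₁ ι₂ R R with
      map_app' := fun v => by simp [weightedSumSquares_apply, Fintype.sum_sum_type] }⟩

theorem not_anisotropic_weightedSumSquares_sumElim_neg_iff (w₁ : ι₁ → R) (w₂ : ι₂ → R) :
    ¬(weightedSumSquares R (Sum.elim w₁ fun i => -w₂ i)).Anisotropic ↔
      ∃ x₁ x₂, (x₁, x₂) ≠ 0 ∧ weightedSumSquares R w₁ x₁ = weightedSumSquares R w₂ x₂ := by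
  have hneg (x) : weightedSumSquares R (fun i => -w₂ i) x = -weightedSumSquares R w₂ x := by
    simp [weightedSumSquares_apply]
  rw [(weightedSumSquares_sumElim_equivalent _ _).anisotropic_iff, not_anisotropic_iff_exists]
  simp only [Prod.exists, prod_apply, hneg, add_neg_eq_zero]

theorem smul_weightedSumSquares (c : R) (w : ι → R) :
    c • weightedSumSquares R w = weightedSumSquares R (c • w) := by
  ext v
  simp [weightedSumSquares_apply, Finset.mul_sum, mul_assoc]

theorem smul_weightedSumSquares_sumElim_neg (c : R) (u : ι → R) :
    c • weightedSumSquares R (Sum.elim u (-u)) =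
      weightedSumSquares R (Sum.elim (c • u) (-(c • u))) := by
  rw [smul_weightedSumSquares]
  congr 1
  funext s
  rcases s with i | i <;> simp

theorem weightedSumSquares_sumElim_neg_prod_equivalent (u : ι₁ → R) (v : ι₂ → R) :
    ((weightedSumSquares R (Sum.elim u (-u))).prod
        (weightedSumSquares R (Sum.elim v (-v)))).Equivalent
      (weightedSumSquares R (Sum.elim (Sum.elim u v) (-Sum.elim u v))) := by
  refine (weightedSumSquares_sumElim_equivalent _ _).symm.trans ?_
  convert weightedSumSquares_equivalent_comp _ (Equiv.sumSumSumComm ι₁ ι₂ ι₁ ι₂) using 2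
  ext ((i | i) | (i | i)) <;> rfl

theorem polar_weightedSumSquares (w x y : ι → R) :
    polar (weightedSumSquares R w) x y = ∑ i, 2 * w i * (x i * y i) := by
  simp only [polar, weightedSumSquares_apply, smul_eq_mul, Pi.add_apply,
    ← Finset.sum_sub_distrib]
  exact Finset.sum_congr rfl fun i _ => by ring

theorem weightedSumSquares_map {S : Type*} [CommRing S] (f : R →+* S) (w x : ι → R) :
    weightedSumSquares S (fun i => f (w i)) (fun i => f (x i)) =
      f (weightedSumSquares R w x) := by
  simp [weightedSumSquares_apply, map_sum]

end CommRing

section Field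

variable {K V V₁ V₂ : Type*} [Field K] [AddCommGroup V] [Module K V]
  [AddCommGroup V₁] [Module K V₁] [AddCommGroup V₂] [Module K V₂]

theorem smul_mul_self_equivalent (Q : QuadraticForm K V) {c : K} (hc : c ≠ 0) :
    ((c * c) • Q).Equivalent Q :=
  ⟨{ LinearEquiv.smulOfUnit (Units.mk0 c hc) with
      map_app' := fun x => by
        simp [LinearEquiv.smulOfUnit, QuadraticMap.map_smul, mul_assoc] }⟩

theorem smul_prod_smul_equivalent (ψ : QuadraticForm K V) {s r : K} (hsr : s + r ≠ 0) :
    ((s • ψ).prod (r • ψ)).Equivalent (((s + r) • ψ).prod ((s * r * (s + r)) • ψ)) :=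
  ⟨{ toFun p := ((s + r)⁻¹ • (s • p.1 + r • p.2), (s + r)⁻¹ • (p.1 - p.2))
     invFun q := (q.1 + r • q.2, q.1 - s • q.2)
     map_add' p q := by ext <;> simp only [Prod.fst_add, Prod.snd_add] <;> module
     map_smul' c p := by
       ext <;> simp only [Prod.smul_fst, Prod.smul_snd, RingHom.id_apply] <;> module
     left_inv p := by ext <;> match_scalars <;> field_simp <;> ring
     right_inv q := by ext <;> match_scalars <;> field_simp <;> ring
     map_app' p := by
       simp only [prod_apply, smul_apply, QuadraticMap.map_smul, QuadraticMap.map_add ψ,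
         map_sub_eq, polar_smul_left, polar_smul_right, smul_eq_mul]
       field_simp
       ring }⟩

noncomputable def reflection (Q : QuadraticForm K V) {v : V} (hv : Q v ≠ 0) :
    Q.IsometryEquiv Q where
  toLinearEquiv := Module.reflection (x := v) (f := (Q v)⁻¹ • polarBilin Q v) <| by
    change (Q v)⁻¹ * polar Q v v = 2
    rw [polar_self, two_nsmul]
    field_simp
    norm_num
  map_app' x := by
    change Q (x - ((Q v)⁻¹ * polar Q v x) • v) = Q x
    rw [map_sub_eq, QuadraticMap.map_smul, polar_smul_right, polar_comm Q v x, smul_eq_mul,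
      smul_eq_mul]
    field_simp
    ring

theorem reflection_apply (Q : QuadraticForm K V) {v : V} (hv : Q v ≠ 0) (x : V) :
    reflection Q hv x = x - ((Q v)⁻¹ * polar Q v x) • v :=
  rfl

theorem reflection_apply_of_polar_eq (Q : QuadraticForm K V) {v x : V} (hv : Q v ≠ 0)
    (hx : polar Q v x = Q v) : reflection Q hv x = x - v := by
  rw [reflection_apply, hx, inv_mul_cancel₀ hv, one_smul]

theorem exists_isometryEquiv_apply_eq (Q : QuadraticForm K V) (h2 : (2 : K) ≠ 0) {u v : V}
    (huv : Q u = Q v) (hv : Q v ≠ 0) : ∃ f : Q.IsometryEquiv Q, f u = v := by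
  by_cases hsub : Q (u - v) = 0
  · -- `u - v` is isotropic: reflect in `u + v` (sending `u` to `-v`), then in `v`
    have hpol : polar Q u v = 2 * Q v := by
      have := map_sub_eq Q u v
      rw [hsub, huv] at this
      linear_combination this
    have hadd : Q (u + v) = 4 * Q v := by
      rw [QuadraticMap.map_add Q, huv, hpol]
      ring
    have hadd₀ : Q (u + v) ≠ 0 := by
      rw [hadd, show (4 : K) = 2 * 2 by norm_num]
      exact mul_ne_zero (mul_ne_zero h2 h2) hv
    refine ⟨(reflection Q hadd₀).trans (reflection Q hv), ?_⟩
    have h₁ : reflection Q hadd₀ u = -v := by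
      rw [reflection_apply_of_polar_eq _ _ (by
        rw [polar_add_left, polar_self, two_nsmul, polar_comm Q v u, huv, hpol, hadd]; ring)]
      abel
    change reflection Q hv (reflection Q hadd₀ u) = v
    rw [h₁, reflection_apply, polar_neg_right, polar_self, two_nsmul]
    match_scalars
    field_simp
    ring
  · refine ⟨reflection Q hsub, ?_⟩
    rw [reflection_apply_of_polar_eq _ _ (by
      rw [polar_sub_left, polar_self, map_sub_eq, huv, two_nsmul, polar_comm Q v u])]
    abel

def IsRound (Q : QuadraticForm K V) : Prop :=
  ∀ x, Q x ≠ 0 → ((Q x) • Q).Equivalent Q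

theorem IsRound.of_equivalent {Q₁ : QuadraticForm K V₁} {Q₂ : QuadraticForm K V₂}
    (h : Q₁.Equivalent Q₂) (hQ₂ : IsRound Q₂) : IsRound Q₁ := by
  obtain ⟨f⟩ := h
  intro x hx
  rw [← f.map_app x] at hx ⊢
  exact (Equivalent.smul ⟨f⟩ _).trans ((hQ₂ _ hx).trans ⟨f.symm⟩)

theorem IsRound.smul_mul_equivalent {ψ : QuadraticForm K V} (hψ : IsRound ψ) {x : V}
    (hx : ψ x ≠ 0) (c : K) : ((c * ψ x) • ψ).Equivalent (c • ψ) := by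
  rw [mul_smul]
  exact Equivalent.smul (hψ x hx) c

theorem IsRound.prod_smul {ψ : QuadraticForm K V} (hψ : IsRound ψ) {t : K} (ht : t ≠ 0) :
    IsRound (ψ.prod (t • ψ)) := by
  rintro ⟨x₁, x₂⟩ he
  change ψ x₁ + t * ψ x₂ ≠ 0 at he
  change ((ψ x₁ + t * ψ x₂) • ψ.prod (t • ψ)).Equivalent _
  set p := ψ x₁
  set q := ψ x₂
  rw [smul_prod]
  by_cases hq : q = 0
  · simp only [hq, mul_zero, add_zero] at he ⊢
    rw [smul_comm]
    exact (hψ x₁ he).prod ((hψ x₁ he).smul t)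
  by_cases hp : p = 0
  · simp only [hp, zero_add] at he ⊢
    have h₂ : ((t * q) • t • ψ).Equivalent ψ := by
      rw [smul_smul, show t * q * t = t * t * q by ring]
      exact (hψ.smul_mul_equivalent hq _).trans (smul_mul_self_equivalent ψ ht)
    exact ((hψ.smul_mul_equivalent hq t).prod h₂).trans ⟨IsometryEquiv.prodComm _ _⟩
  -- `ψ ⊥ tψ ≅ pψ ⊥ tqψ ≅ (p + tq)ψ ⊥ ptq(p + tq)ψ`, and `ptq(p + tq)ψ ≅ (p + tq)tψ`
  have hsplit : (ψ.prod (t • ψ)).Equivalent ((p • ψ).prod ((t * q) • ψ)) :=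
    (hψ x₁ hp).symm.prod (hψ.smul_mul_equivalent hq t).symm
  have hscale : ((p + t * q) • t • ψ).Equivalent ((p * (t * q) * (p + t * q)) • ψ) := by
    rw [smul_smul, show p * (t * q) * (p + t * q) = (p + t * q) * t * q * p by ring]
    exact ((hψ.smul_mul_equivalent hp _).trans (hψ.smul_mul_equivalent hq _)).symm
  exact ((Equivalent.refl _).prod hscale).trans
    ((smul_prod_smul_equivalent ψ he).symm.trans hsplit.symm)

theorem IsRound.exists_prod_smul_equivalent {ψ : QuadraticForm K V} (hψ : IsRound ψ)
    (han : ψ.Anisotropic) {t : K} (ht : t ≠ 0) (hiso : ¬(ψ.prod (t • ψ)).Anisotropic) :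
    ∃ p : K, p ≠ 0 ∧ (ψ.prod (t • ψ)).Equivalent ((p • ψ).prod ((-p) • ψ)) := by
  obtain ⟨⟨x₁, x₂⟩, hx, hzero⟩ := (not_anisotropic_iff_exists _).1 hiso
  change ψ x₁ + t * ψ x₂ = 0 at hzero
  have hq : ψ x₂ ≠ 0 := fun hq => hx <| by
    rw [hq, mul_zero, add_zero] at hzero
    rw [han x₁ hzero, han x₂ hq, Prod.mk_zero_zero]
  have hp : ψ x₁ ≠ 0 := by
    rw [eq_neg_of_add_eq_zero_left hzero]
    exact neg_ne_zero.2 (mul_ne_zero ht hq)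
  refine ⟨ψ x₁, hp, (hψ x₁ hp).symm.prod ?_⟩
  rw [← eq_neg_of_add_eq_zero_right hzero]
  exact (hψ.smul_mul_equivalent hq t).symm

theorem IsRound.exists_polar_eq_zero_and_apply_eq {Q : QuadraticForm K V} (hQ : IsRound Q)
    (h2 : (2 : K) ≠ 0) {v₀ x y : V} (hv₀ : Q v₀ = 1) (hy : Q y ≠ 0) (hxy : polar Q x y = 0) :
    ∃ z, polar Q z v₀ = 0 ∧ Q z = Q x / Q y := by
  obtain ⟨f⟩ := hQ y hy
  have hf (v : V) : Q ((Q y)⁻¹ • f v) = Q v / Q y := by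
    rw [QuadraticMap.map_smul, f.map_app, smul_apply, smul_eq_mul, smul_eq_mul]
    field_simp
  have hfy : Q ((Q y)⁻¹ • f y) = Q v₀ := by rw [hf, div_self hy, hv₀]
  obtain ⟨g, hg⟩ := exists_isometryEquiv_apply_eq Q h2 hfy (by rw [hv₀]; exact one_ne_zero)
  refine ⟨g ((Q y)⁻¹ • f x), ?_, by rw [g.map_app, hf]⟩
  rw [← hg, g.polar_map, polar_smul_left, polar_smul_right, f.polar_map, FunLike.coe_smul,
    polar_smul, hxy]
  simp

theorem weightedSumSquares_sumElim_neg_equivalent {κ : Type*} [Fintype κ] (h2 : (2 : K) ≠ 0)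
    {u : κ → K} (hu : ∀ i, u i ≠ 0) :
    (weightedSumSquares K (Sum.elim u (-u))).Equivalent
      (weightedSumSquares K (Sum.elim (1 : κ → K) (-1 : κ → K))) :=
  ⟨{ toFun v := Sum.elim
        (fun i => (u i * (v (.inl i) + v (.inr i)) + (v (.inl i) - v (.inr i))) / 2)
        (fun i => (u i * (v (.inl i) + v (.inr i)) - (v (.inl i) - v (.inr i))) / 2)
     invFun v := Sum.elim
        (fun i => ((v (.inl i) + v (.inr i)) / u i + (v (.inl i) - v (.inr i))) / 2)
        (fun i => ((v (.inl i) + v (.inr i)) / u i - (v (.inl i) - v (.inr i))) / 2)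
     map_add' v w := by ext (i | i) <;> simp <;> ring
     map_smul' c v := by ext (i | i) <;> simp <;> ring
     left_inv v := by ext (i | i) <;> have := hu i <;> simp <;> field_simp <;> ring
     right_inv v := by ext (i | i) <;> have := hu i <;> simp <;> field_simp <;> ring
     map_app' v := by
       simp only [weightedSumSquares_apply, Fintype.sum_sum_type, Sum.elim_inl, Sum.elim_inr,
         Pi.one_apply, Pi.neg_apply, smul_eq_mul, ← Finset.sum_add_distrib]
       exact Finset.sum_congr rfl fun i _ => by field_simp; ring }⟩

end Field

end QuadraticMap

section Hyperbolic

variable {ι κ : Type*} [Fintype ι] [Fintype κ]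

theorem isHyperbolic_of_equivalent {K : Type*} [Field K] {Q : QuadraticMap K (ι → K) K}
    (h2 : (2 : K) ≠ 0) {u : κ → K} (hu : ∀ i, u i ≠ 0)
    (h : Q.Equivalent (weightedSumSquares K (Sum.elim u (-u)))) : IsHyperbolic Q := by
  let e := (Fintype.equivFin κ).symm
  have hw : Sum.elim (1 : κ → K) (-1) ∘ Equiv.sumCongr e e =
      Sum.elim (fun _ => 1) (fun _ => -1) := by
    funext s
    rcases s with i | i <;> rfl
  refine ⟨Fintype.card κ, h.trans <| (weightedSumSquares_sumElim_neg_equivalent h2 hu).trans ?_⟩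
  rw [← hw]
  exact weightedSumSquares_equivalent_comp _ _

theorem IsHyperbolic.not_anisotropic {R : Type*} [CommRing R] [Nontrivial R]
    {Q : QuadraticMap R (ι → R) R} (hQ : IsHyperbolic Q) {v : ι → R} (hv : Q v ≠ 0) :
    ¬Q.Anisotropic := by
  obtain ⟨k, ⟨f⟩⟩ := hQ
  have hk : k ≠ 0 := by
    rintro rfl
    rw [← f.map_app, weightedSumSquares_apply] at hv
    exact hv (Finset.sum_of_isEmpty _)
  rw [Equivalent.anisotropic_iff ⟨f⟩, not_anisotropic_iff_exists]
  have : Nonempty (Fin k) := ⟨⟨0, Nat.pos_of_ne_zero hk⟩⟩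
  exact ⟨1, one_ne_zero, by simp [weightedSumSquares_apply, Fintype.sum_sum_type]⟩

end Hyperbolic

section Pfister

noncomputable def finsetCastSuccEquiv (m : ℕ) :
    Finset (Fin m) ⊕ Finset (Fin m) ≃ Finset (Fin (m + 1)) where
  toFun := Sum.elim (·.map Fin.castSuccEmb) (insert (Fin.last m) <| ·.map Fin.castSuccEmb)
  invFun T :=
    if Fin.last m ∈ T then .inr (T.preimage Fin.castSucc (Fin.castSucc_injective m).injOn)
    else .inl (T.preimage Fin.castSucc (Fin.castSucc_injective m).injOn)
  left_inv := by rintro (S | S) <;> simp [Finset.ext_iff, Fin.castSucc_ne_last]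
  right_inv T := by
    ext i
    induction i using Fin.lastCases with
    | last => by_cases h : Fin.last m ∈ T <;> simp [h, Fin.castSucc_ne_last]
    | cast i => by_cases h : Fin.last m ∈ T <;> simp [h, Fin.castSucc_ne_last]

section CommRing

variable {R : Type*} [CommRing R] {m : ℕ}

theorem pfisterForm_succ_equivalent (a : Fin (m + 1) → R) :
    (pfisterForm R a).Equivalent
      ((pfisterForm R (Fin.init a)).prod ((-a (Fin.last m)) • pfisterForm R (Fin.init a))) := by
  have hw : (fun S => ∏ i ∈ S, -a i) ∘ finsetCastSuccEquiv m =
      Sum.elim (fun S => ∏ i ∈ S, -Fin.init a i)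
        ((-a (Fin.last m)) • fun S => ∏ i ∈ S, -Fin.init a i) := by
    funext s
    rcases s with S | S <;>
      simp [finsetCastSuccEquiv, Finset.prod_insert, Fin.castSucc_ne_last, Fin.init]
  have h := weightedSumSquares_equivalent_comp (fun S => ∏ i ∈ S, -a i) (finsetCastSuccEquiv m)
  rw [hw] at h
  unfold pfisterForm
  rw [smul_weightedSumSquares]
  exact h.trans (weightedSumSquares_sumElim_equivalent _ _)

theorem pfisterForm_apply (a : Fin m → R) (x : Finset (Fin m) → R) :
    pfisterForm R a x =
      x ∅ * x ∅ + weightedSumSquares R (pfisterPureCoeff R a) (fun S => x S.1) := by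
  simp only [pfisterForm, pfisterPureCoeff, weightedSumSquares_apply, smul_eq_mul]
  rw [← Finset.sum_subtype (Finset.univ.erase ∅) (fun S => by simp [Finset.nonempty_iff_ne_empty])
    (fun S => (∏ i ∈ S, -a i) * (x S * x S)), ← Finset.add_sum_erase _ _ (Finset.mem_univ ∅)]
  simp

theorem pfisterForm_fin_zero_apply (a : Fin 0 → R) (x : Finset (Fin 0) → R) :
    pfisterForm R a x = x ∅ * x ∅ := by
  have : IsEmpty {S : Finset (Fin 0) // S.Nonempty} :=
    ⟨fun S => S.2.ne_empty (Subsingleton.elim _ _)⟩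
  simp [pfisterForm_apply, weightedSumSquares_apply]

theorem pfisterForm_apply_single_empty (a : Fin m → R) :
    pfisterForm R a (Pi.single ∅ 1) = 1 := by
  simp [pfisterForm_apply, weightedSumSquares_apply,
    fun S : {S : Finset (Fin m) // S.Nonempty} => S.2.ne_empty]

theorem pfisterForm_map {S : Type*} [CommRing S] (f : R →+* S) (a : Fin m → R) :
    pfisterForm S (fun j => f (a j)) = weightedSumSquares S (fun T => f (∏ i ∈ T, -a i)) := by
  simp [pfisterForm, map_prod]

theorem pfisterPureCoeff_map {S : Type*} [CommRing S] (f : R →+* S) (a : Fin m → R) :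
    pfisterPureCoeff S (fun j => f (a j)) = fun T => f (pfisterPureCoeff R a T) := by
  funext T
  simp [pfisterPureCoeff, map_prod]

theorem pfisterForm_not_anisotropic_of_mul_self_add_eq_zero {a : Fin m → R} {t : R}
    {z : {S : Finset (Fin m) // S.Nonempty} → R}
    (hz : t * t + weightedSumSquares R (pfisterPureCoeff R a) z = 0) (hne : t ≠ 0 ∨ z ≠ 0) :
    ¬(pfisterForm R a).Anisotropic := by
  rw [not_anisotropic_iff_exists]
  refine ⟨fun S => if h : S.Nonempty then z ⟨S, h⟩ else t, ?_, ?_⟩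
  · intro h0
    rcases hne with ht | hz
    · exact ht (by simpa using congrFun h0 ∅)
    · exact hz (funext fun S => by simpa [S.2] using congrFun h0 S.1)
  · simpa [pfisterForm_apply, Subtype.prop] using hz

theorem pfisterForm_pure_anisotropic {a : Fin m → R} (ha : (pfisterForm R a).Anisotropic) :
    (weightedSumSquares R (pfisterPureCoeff R a)).Anisotropic := fun z hz => by
  by_contra hne
  exact pfisterForm_not_anisotropic_of_mul_self_add_eq_zero (t := 0) (by simpa using hz)
    (.inr hne) ha

theorem ne_zero_of_pfisterForm_anisotropic [Nontrivial R] {a : Fin m → R}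
    (ha : (pfisterForm R a).Anisotropic) (i : Fin m) : a i ≠ 0 := by
  intro hi
  refine pfisterForm_not_anisotropic_of_mul_self_add_eq_zero (a := a) (t := 0)
    (z := Pi.single ⟨{i}, Finset.singleton_nonempty i⟩ 1) ?_ (.inr (by simp)) ha
  simp [weightedSumSquares_apply, pfisterPureCoeff, Pi.single_apply, hi]

end CommRing

variable {K : Type*} [Field K] {m : ℕ}

theorem pfisterForm_isRound {a : Fin m → K} (ha : ∀ i, a i ≠ 0) : IsRound (pfisterForm K a) := by
  induction m with
  | zero =>
    intro x hx
    rw [pfisterForm_fin_zero_apply] at hx ⊢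
    exact smul_mul_self_equivalent _ (left_ne_zero_of_mul hx)
  | succ m ih =>
    exact IsRound.of_equivalent (pfisterForm_succ_equivalent a)
      ((ih fun i => ha _).prod_smul (neg_ne_zero.2 (ha _)))

theorem pfisterForm_isHyperbolic_of_not_anisotropic (h2 : (2 : K) ≠ 0) {a : Fin m → K}
    (ha : ∀ i, a i ≠ 0) (hiso : ¬(pfisterForm K a).Anisotropic) :
    IsHyperbolic (pfisterForm K a) := by
  induction m with
  | zero =>
    refine absurd (fun x hx => ?_) hiso
    rw [pfisterForm_fin_zero_apply, mul_self_eq_zero] at hx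
    funext S
    rwa [Subsingleton.elim S ∅]
  | succ m ih =>
    have hsucc := pfisterForm_succ_equivalent a
    set w : Finset (Fin m) → K := fun S => ∏ i ∈ S, -Fin.init a i
    have hψ : pfisterForm K (Fin.init a) = weightedSumSquares K w := rfl
    have ht : -a (Fin.last m) ≠ 0 := neg_ne_zero.2 (ha _)
    by_cases han : (pfisterForm K (Fin.init a)).Anisotropic
    · obtain ⟨p, hp, hequiv⟩ := (pfisterForm_isRound (a := Fin.init a) fun i => ha _)
        |>.exists_prod_smul_equivalent han ht (by rwa [← hsucc.anisotropic_iff])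
      refine isHyperbolic_of_equivalent h2 (u := p • w)
        (fun S => mul_ne_zero hp (Finset.prod_ne_zero_iff.2 fun i _ => neg_ne_zero.2 (ha _)))
        (hsucc.trans (hequiv.trans ?_))
      rw [hψ, smul_weightedSumSquares, smul_weightedSumSquares, neg_smul]
      exact (weightedSumSquares_sumElim_equivalent _ _).symm
    · obtain ⟨k, hk⟩ := ih (a := Fin.init a) (fun i => ha _) han
      refine isHyperbolic_of_equivalent h2
        (u := Sum.elim (1 : Fin k → K) (-a (Fin.last m) • (1 : Fin k → K)))
        (fun s => by rcases s with i | i <;> simp [ha])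
        (hsucc.trans ((hk.prod (hk.smul _)).trans ?_))
      rw [show Sum.elim (fun _ : Fin k => (1 : K)) (fun _ => -1) = Sum.elim (1 : Fin k → K) (-1)
        from rfl, smul_weightedSumSquares_sumElim_neg]
      exact weightedSumSquares_sumElim_neg_prod_equivalent _ _

theorem exists_pure_eq_div_of_polar_eq_zero (h2 : (2 : K) ≠ 0) {a : Fin m → K}
    (ha : ∀ i, a i ≠ 0) {x y : Finset (Fin m) → K} (hy : pfisterForm K a y ≠ 0)
    (hxy : polar (pfisterForm K a) x y = 0) :
    ∃ z, weightedSumSquares K (pfisterPureCoeff K a) z = pfisterForm K a x / pfisterForm K a y := by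
  obtain ⟨z, hz₀, hz⟩ := (pfisterForm_isRound ha).exists_polar_eq_zero_and_apply_eq h2
    (pfisterForm_apply_single_empty a) hy hxy
  have hz_empty : z ∅ = 0 := by
    simpa [pfisterForm, polar_weightedSumSquares, Pi.single_apply, h2] using hz₀
  exact ⟨fun S => z S.1, by rw [← hz, pfisterForm_apply, hz_empty, mul_zero, zero_add]⟩

end Pfister

section QuadraticExtension

variable {F : Type*} [Field F] {c : F}

theorem Polynomial.irreducible_X_sq_sub_C (hc : ¬IsSquare c) : Irreducible (X ^ 2 - C c) :=
  X_pow_sub_C_irreducible_of_prime Nat.prime_two fun b hb => hc ⟨b, by rw [← hb, _root_.sq]⟩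

namespace AdjoinRoot

theorem root_X_sq_sub_C_mul_self (c : F) :
    root (X ^ 2 - C c) * root (X ^ 2 - C c) = algebraMap F (AdjoinRoot (X ^ 2 - C c)) c := by
  have h := eval₂_root (X ^ 2 - C c)
  rw [eval₂_sub, eval₂_X_pow, eval₂_C, sub_eq_zero] at h
  rw [← _root_.sq, h, algebraMap_eq]

theorem exists_eq_algebraMap_add_algebraMap_mul_root (z : AdjoinRoot (X ^ 2 - C c)) :
    ∃ s t : F, z = algebraMap F _ s + algebraMap F _ t * root (X ^ 2 - C c) := by
  have hg := monic_X_pow_sub_C c two_ne_zero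
  obtain ⟨p, rfl⟩ := mk_surjective z
  rw [← mk_leftInverse hg (mk _ p), modByMonicHom_mk]
  have hp : (p %ₘ (X ^ 2 - C c)).degree ≤ 1 := by
    have := degree_modByMonic_lt p hg
    rw [degree_X_pow_sub_C two_pos] at this
    exact Order.le_of_lt_succ this
  refine ⟨(p %ₘ (X ^ 2 - C c)).coeff 0, (p %ₘ (X ^ 2 - C c)).coeff 1, ?_⟩
  conv_lhs => rw [eq_X_add_C_of_degree_le_one hp]
  simp [algebraMap_eq, add_comm]

theorem eq_zero_of_algebraMap_add_algebraMap_mul_root_eq_zero {s t : F}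
    (h : algebraMap F (AdjoinRoot (X ^ 2 - C c)) s + algebraMap F _ t * root _ = 0) :
    s = 0 ∧ t = 0 := by
  have hg := monic_X_pow_sub_C c two_ne_zero
  have hlt : (C t * X + C s).degree < (X ^ 2 - C c).degree := by
    rw [degree_X_pow_sub_C two_pos]
    exact degree_linear_le.trans_lt (by norm_num)
  have h0 : C t * X + C s = 0 := by
    rw [← (modByMonic_eq_self_iff hg).2 hlt, ← modByMonicHom_mk hg]
    simpa [algebraMap_eq, add_comm] using congrArg (modByMonicHom hg) h
  exact ⟨by simpa using congrArg (coeff · 0) h0, by simpa using congrArg (coeff · 1) h0⟩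

end AdjoinRoot

open AdjoinRoot

theorem weightedSumSquares_algebraMap_add_algebraMap_mul_root {ι : Type*} [Fintype ι]
    (w x y : ι → F) :
    weightedSumSquares (AdjoinRoot (X ^ 2 - C c))
        (fun i => algebraMap F (AdjoinRoot (X ^ 2 - C c)) (w i))
        (fun i => algebraMap F _ (x i) + algebraMap F _ (y i) * root (X ^ 2 - C c)) =
      algebraMap F (AdjoinRoot (X ^ 2 - C c))
          (weightedSumSquares F w x + c * weightedSumSquares F w y) +
        algebraMap F _ (polar (weightedSumSquares F w) x y) * root (X ^ 2 - C c) := by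
  simp only [weightedSumSquares_apply, polar_weightedSumSquares, smul_eq_mul, map_add, map_mul,
    map_sum, map_ofNat, Finset.mul_sum, Finset.sum_mul, ← Finset.sum_add_distrib]
  refine Finset.sum_congr rfl fun i _ => ?_
  linear_combination (algebraMap F _ (w i) * algebraMap F _ (y i) * algebraMap F _ (y i)) *
    root_X_sq_sub_C_mul_self c

variable {m : ℕ}

theorem exists_pure_eq_neg_of_isHyperbolic (h2 : (2 : F) ≠ 0) {a : Fin m → F}
    (ha : (pfisterForm F a).Anisotropic) (hc : ¬IsSquare c)
    (hH : IsHyperbolic (pfisterForm (AdjoinRoot (X ^ 2 - C c)) fun j => algebraMap F _ (a j))) :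
    ∃ z, weightedSumSquares F (pfisterPureCoeff F a) z = -c := by
  have : Fact (Irreducible (X ^ 2 - C c)) := ⟨irreducible_X_sq_sub_C hc⟩
  obtain ⟨v, hv, hv0⟩ := (not_anisotropic_iff_exists _).1 <|
    hH.not_anisotropic (by rw [pfisterForm_apply_single_empty]; exact one_ne_zero)
  choose x y hxy using fun S => exists_eq_algebraMap_add_algebraMap_mul_root (v S)
  rw [funext hxy, pfisterForm_map, weightedSumSquares_algebraMap_add_algebraMap_mul_root] at hv0
  obtain ⟨hval, hpolar⟩ := eq_zero_of_algebraMap_add_algebraMap_mul_root_eq_zero hv0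
  change pfisterForm F a x + c * pfisterForm F a y = 0 at hval
  have hy : pfisterForm F a y ≠ 0 := fun hy => hv <| by
    rw [hy, mul_zero, add_zero] at hval
    exact funext fun S => by simp [hxy, ha x hval, ha y hy]
  obtain ⟨z, hz⟩ := exists_pure_eq_div_of_polar_eq_zero h2
    (ne_zero_of_pfisterForm_anisotropic ha) hy hpolar
  refine ⟨z, ?_⟩
  rw [hz, eq_neg_of_add_eq_zero_left hval]
  field_simp

theorem isHyperbolic_of_pure_eq_neg (h2 : (2 : F) ≠ 0) {a : Fin m → F} (ha : ∀ i, a i ≠ 0)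
    (hc : ¬IsSquare c) {z : {S : Finset (Fin m) // S.Nonempty} → F}
    (hz : weightedSumSquares F (pfisterPureCoeff F a) z = -c) :
    IsHyperbolic (pfisterForm (AdjoinRoot (X ^ 2 - C c)) fun j => algebraMap F _ (a j)) := by
  have : Fact (Irreducible (X ^ 2 - C c)) := ⟨irreducible_X_sq_sub_C hc⟩
  have hroot : root (X ^ 2 - C c) ≠ 0 := fun h => hc <| by
    have hc0 : algebraMap F (AdjoinRoot (X ^ 2 - C c)) c = 0 := by
      rw [← root_X_sq_sub_C_mul_self, h, mul_zero]
    rw [(map_eq_zero _).1 hc0]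
    exact IsSquare.zero
  have h2' : (2 : AdjoinRoot (X ^ 2 - C c)) ≠ 0 := by
    rw [← map_ofNat (algebraMap F (AdjoinRoot (X ^ 2 - C c))) 2]
    exact (_root_.map_ne_zero _).2 h2
  refine pfisterForm_isHyperbolic_of_not_anisotropic h2'
    (fun i => (_root_.map_ne_zero _).2 (ha i)) <|
    pfisterForm_not_anisotropic_of_mul_self_add_eq_zero (t := root _)
      (z := fun S => algebraMap F _ (z S)) ?_ (.inl hroot)
  rw [pfisterPureCoeff_map, weightedSumSquares_map, hz, root_X_sq_sub_C_mul_self, map_neg,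
    add_neg_cancel]

end QuadraticExtension

/-- anisotropic Pfister forms `φ` (m-fold) and `γ` (n-fold) over a field `F` of
characteristic not 2 share a common quadratic splitting field `F(√c)` if and only if the form
`γ' ⊥ ⟨-1⟩φ'` is isotropic over `F`. -/
theorem pfister_pair_common_quadratic_splitting_iff
    (F : Type*) [Field F] (hF : ringChar F ≠ 2)
    (m n : ℕ) (a : Fin m → F) (b : Fin n → F)
    (hφ : (pfisterForm F a).Anisotropic) (hγ : (pfisterForm F b).Anisotropic) :
    (∃ c : F, ¬ IsSquare c ∧
        IsHyperbolic (pfisterForm (AdjoinRoot (X ^ 2 - C c : F[X]))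
          (fun j => algebraMap F _ (a j))) ∧
        IsHyperbolic (pfisterForm (AdjoinRoot (X ^ 2 - C c : F[X]))
          (fun j => algebraMap F _ (b j)))) ↔
      ¬ (weightedSumSquares F
          (Sum.elim (pfisterPureCoeff F b) (fun S => - pfisterPureCoeff F a S))).Anisotropic := by
  have h2 : (2 : F) ≠ 0 := Ring.two_ne_zero hF
  rw [not_anisotropic_weightedSumSquares_sumElim_neg_iff]
  constructor
  · rintro ⟨c, hc, hφc, hγc⟩
    obtain ⟨x, hx⟩ := exists_pure_eq_neg_of_isHyperbolic h2 hφ hc hφc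
    obtain ⟨y, hy⟩ := exists_pure_eq_neg_of_isHyperbolic h2 hγ hc hγc
    refine ⟨y, x, fun hyx => hc ?_, hy.trans hx.symm⟩
    rw [(Prod.mk_eq_zero.1 hyx).2, map_zero, zero_eq_neg] at hx
    exact hx ▸ IsSquare.zero
  · rintro ⟨y, x, hyx, hxy⟩
    have hx : x ≠ 0 := fun hx => hyx <| by
      rw [hx, map_zero] at hxy
      rw [pfisterForm_pure_anisotropic hγ y hxy, hx, Prod.mk_zero_zero]
    set e := weightedSumSquares F (pfisterPureCoeff F a) x
    have hsq : ¬IsSquare (-e) := fun ⟨d, hd⟩ =>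
      pfisterForm_not_anisotropic_of_mul_self_add_eq_zero (by rw [← hd, neg_add_cancel])
        (.inr hx) hφ
    exact ⟨-e, hsq,
      isHyperbolic_of_pure_eq_neg h2 (ne_zero_of_pfisterForm_anisotropic hφ) hsq (neg_neg e).symm,
      isHyperbolic_of_pure_eq_neg h2 (ne_zero_of_pfisterForm_anisotropic hγ) hsq
        (by rw [hxy, neg_neg])⟩
end

section
/- Let F, ℓ, and the ℓ-primary Brauer dimension be as follows: suppose that for every finite extension of F, any finite subset of the ℓ-torsion of the Brauer group can be split by an extension of degree at most C. Then any finite subset of the ℓ^m-torsion of the Brauer group of F can be split by an extension of degree at most C^m. -/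
universe u v

variable (F : Type u) [Field F]

/-- An extension `M` of the intermediate extension `L/F`, with `[M:L] ≤ c` (expressed as
`[M:F] ≤ c·[L:F]`), splitting every Brauer class in `S ⊆ Br(L)`. -/
structure TowerSplit
    (Br : (L : Type u) → [Field L] → [Algebra F L] → AddCommGrpCat.{v})
    (res : (L M : Type u) → [Field L] → [Algebra F L] → [Field M] → [Algebra F M] →
      (L →ₐ[F] M) → (Br L →+ Br M))
    (L : Type u) [Field L] [Algebra F L] (S : Set (Br L)) (c : ℕ) :
    Type (max (u + 1) v) where
  M : Type u
  [fieldM : Field M]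
  [algM : Algebra F M]
  emb : L →ₐ[F] M
  finite : FiniteDimensional F M
  deg_le : Module.finrank F M ≤ c * Module.finrank F L
  splits : ∀ α ∈ S, res L M emb α = 0

/-!
Induction on `m`: the classes `ℓ^(m-1) • α`, `α ∈ B`, are `ℓ`-torsion, so an extension `L/F` of
degree at most `C` splits them. Over `L` the restrictions of the classes in `B` are then
`ℓ^(m-1)`-torsion, and by induction they are split by an extension of `L` of degree at most
`C^(m-1)`; degrees multiply in the tower.
-/

attribute [instance] TowerSplit.fieldM TowerSplit.algM

namespace TowerSplit

variable {F}
variable {Br : (L : Type u) → [Field L] → [Algebra F L] → AddCommGrpCat.{v}}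
  {res : (L M : Type u) → [Field L] → [Algebra F L] → [Field M] → [Algebra F M] →
    (L →ₐ[F] M) → (Br L →+ Br M)}

def refl (res_id : ∀ (L : Type u) [Field L] [Algebra F L] (α : Br L),
      res L L (AlgHom.id F L) α = α)
    (L : Type u) [Field L] [Algebra F L] [FiniteDimensional F L] (S : Set (Br L))
    (hS : ∀ α ∈ S, α = 0) : TowerSplit F Br res L S 1 where
  M := L
  emb := AlgHom.id F L
  finite := inferInstance
  deg_le := (one_mul _).ge
  splits α hα := (res_id L α).trans (hS α hα)

def trans (res_comp : ∀ (L M N : Type u) [Field L] [Algebra F L] [Field M] [Algebra F M]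
      [Field N] [Algebra F N] (f : L →ₐ[F] M) (g : M →ₐ[F] N) (α : Br L),
      res M N g (res L M f α) = res L N (g.comp f) α)
    {L : Type u} [Field L] [Algebra F L] {S S' : Set (Br L)} {c d : ℕ}
    (T : TowerSplit F Br res L S c) {S'' : Set (Br T.M)}
    (hS' : Set.MapsTo (res L T.M T.emb) S' S'') (T' : TowerSplit F Br res T.M S'' d) :
    TowerSplit F Br res L S' (d * c) where
  M := T'.M
  emb := T'.emb.comp T.emb
  finite := T'.finite
  deg_le := calc
    Module.finrank F T'.M ≤ d * Module.finrank F T.M := T'.deg_le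
    _ ≤ d * (c * Module.finrank F L) := Nat.mul_le_mul_left d T.deg_le
    _ = d * c * Module.finrank F L := (mul_assoc d c _).symm
  splits α hα := (res_comp L T.M T'.M T.emb T'.emb α).symm.trans (T'.splits _ (hS' hα))

end TowerSplit

theorem nonempty_towerSplit_of_pow_torsion {ℓ C : ℕ}
    {Br : (L : Type u) → [Field L] → [Algebra F L] → AddCommGrpCat.{v}}
    {res : (L M : Type u) → [Field L] → [Algebra F L] → [Field M] → [Algebra F M] →
      (L →ₐ[F] M) → (Br L →+ Br M)}
    (res_id : ∀ (L : Type u) [Field L] [Algebra F L] (α : Br L),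
      res L L (AlgHom.id F L) α = α)
    (res_comp : ∀ (L M N : Type u) [Field L] [Algebra F L] [Field M] [Algebra F M]
      [Field N] [Algebra F N] (f : L →ₐ[F] M) (g : M →ₐ[F] N) (α : Br L),
      res M N g (res L M f α) = res L N (g.comp f) α)
    (hyp : ∀ (L : Type u) [Field L] [Algebra F L], FiniteDimensional F L →
      ∀ (B : Finset (Br L)), (∀ α ∈ B, ℓ • α = 0) →
        Nonempty (TowerSplit F Br res L (B : Set (Br L)) C))
    (k : ℕ) (L : Type u) [Field L] [Algebra F L] [FiniteDimensional F L]
    (B : Finset (Br L)) (hB : ∀ α ∈ B, ℓ ^ k • α = 0) :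
    Nonempty (TowerSplit F Br res L (B : Set (Br L)) (C ^ k)) := by
  classical
  induction k generalizing L with
  | zero => exact ⟨.refl res_id L B fun α hα => by simpa using hB α hα⟩
  | succ k ih =>
    obtain ⟨T⟩ := hyp L inferInstance (B.image (ℓ ^ k • ·)) <|
      Finset.forall_mem_image.2 fun α hα ↦ by rw [smul_smul, ← pow_succ']; exact hB α hα
    have : FiniteDimensional F T.M := T.finite
    obtain ⟨T'⟩ := ih T.M (B.image (res L T.M T.emb)) <|
      Finset.forall_mem_image.2 fun α hα ↦ by
        rw [← map_nsmul]; exact T.splits _ (Finset.mem_image_of_mem _ hα)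
    exact ⟨pow_succ C k ▸ T.trans res_comp (fun α hα ↦ Finset.mem_image_of_mem _ hα) T'⟩

theorem split_ell_power_torsion
    (ℓ : ℕ) (C m : ℕ)
    (Br : (L : Type u) → [Field L] → [Algebra F L] → AddCommGrpCat.{v})
    (res : (L M : Type u) → [Field L] → [Algebra F L] → [Field M] → [Algebra F M] →
      (L →ₐ[F] M) → (Br L →+ Br M))
    -- functoriality of restriction
    (res_id : ∀ (L : Type u) [Field L] [Algebra F L] (α : Br L),
      res L L (AlgHom.id F L) α = α)
    (res_comp : ∀ (L M N : Type u) [Field L] [Algebra F L] [Field M] [Algebra F M]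
      [Field N] [Algebra F N] (f : L →ₐ[F] M) (g : M →ₐ[F] N) (α : Br L),
      res M N g (res L M f α) = res L N (g.comp f) α)
    -- hypothesis: GBrd_ℓ(F) ≤ C
    (hyp : ∀ (L : Type u) [Field L] [Algebra F L], FiniteDimensional F L →
      ∀ (B : Finset (Br L)), (∀ α ∈ B, ℓ • α = 0) →
        Nonempty (TowerSplit F Br res L (B : Set (Br L)) C))
    (B : Finset (Br F)) (hB : ∀ α ∈ B, ℓ ^ m • α = 0) :
    Nonempty (TowerSplit F Br res F (B : Set (Br F)) (C ^ m)) := by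
  exact nonempty_towerSplit_of_pow_torsion F res_id res_comp hyp m F B hB
end

section
/- Let F be a field of characteristic not 2 whose splitting dimension for function fields of curves over an n-local field satisfies: any finite subset of 2-torsion Brauer classes over any finite extension of F can be split by an extension of degree at most D. Then every even-dimensional quadratic form q over F with trivial discriminant achieves maximal Witt index over an extension of degree at most D. -/
/-!
Write `q = ⟨c₀, …, c_{2k-1}⟩` and let `δⱼ = (-1)ʲ c₀ ⋯ c_{2j}` be the signed discriminant of
`⟨c₀, …, c_{2j}⟩`. Over a field `M` splitting the quaternion algebras `(-δⱼ c_{2j+1}, -δⱼ c_{2j+2})`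
for `j < k - 1`, induction on `j` gives `⟨c₀, …, c_{2j}⟩ ≅ j·H ⊥ ⟨δⱼ⟩`: the ternary form
`⟨δⱼ, c_{2j+1}, c_{2j+2}⟩` is, up to the scalar `δⱼ`, a subform of the norm form
`⟨⟨-δⱼ c_{2j+1}, -δⱼ c_{2j+2}⟩⟩`, which is isotropic, so the ternary form is isotropic and
splits as `H ⊥ ⟨δ_{j+1}⟩`. Finally `⟨δ_{k-1}, c_{2k-1}⟩` has `-δ_{k-1} c_{2k-1} = (-1)ᵏ ∏ cᵢ`,
a square, so it is one more hyperbolic plane and `q ⊗ M ≅ k·H`.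
-/

universe u

/-- An extension `M/L` of degree at most `D` splitting each of the quaternion (2-torsion
Brauer) classes `(aᵢ, bᵢ)`, i.e. making each norm form `⟨1, -aᵢ, -bᵢ, aᵢbᵢ⟩` isotropic. -/
structure QuatSplitExt (L : Type u) [Field L] (m : ℕ) (a b : Fin m → L) (D : ℕ) where
  M : Type u
  [fieldM : Field M]
  [algM : Algebra L M]
  finite : FiniteDimensional L M
  deg_le : Module.finrank L M ≤ D
  splits : ∀ i, ∃ x : Fin 4 → M, x ≠ 0 ∧
    x 0 ^ 2 - algebraMap L M (a i) * x 1 ^ 2 - algebraMap L M (b i) * x 2 ^ 2 +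
      algebraMap L M (a i * b i) * x 3 ^ 2 = 0

/-- A field extension `M/L` of degree at most `d` over which the diagonal form `⟨c₁,…,cₙ⟩`
acquires maximal Witt index `⌊n/2⌋`. -/
structure SplitExt (L : Type u) [Field L] (n : ℕ) (c : Fin n → L) (d : ℕ) where
  M : Type u
  [fieldM : Field M]
  [algM : Algebra L M]
  finite : FiniteDimensional L M
  deg_le : Module.finrank L M ≤ d
  maxWitt : ∃ W : Submodule M (Fin n → M),
    (∀ x ∈ W, ∑ i, algebraMap L M (c i) * x i ^ 2 = 0) ∧ Module.finrank M W = n / 2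

open Module

namespace LinearMap.BilinForm

variable {R V : Type*} [CommRing R] [AddCommGroup V] [Module R V] {B : LinearMap.BilinForm R V}

theorem IsSymm.apply_smul_add_smul_add_smul (hB : B.IsSymm) {p e f : V} (hpe : B p e = 0)
    (hpf : B p f = 0) (hef : B e f = 0) (a b c a' b' c' : R) :
    B (a • p + b • e + c • f) (a' • p + b' • e + c' • f) =
      a * a' * B p p + b * b' * B e e + c * c' * B f f := by
  simp only [map_add, map_smul, LinearMap.add_apply, LinearMap.smul_apply, smul_eq_mul, hpe, hpf,
    hef, hB.eq e p, hB.eq f p, hB.eq f e]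
  ring

theorem mem_orthogonal_sup_span_singleton {W : Submodule R V} {x z : V}
    (hx : x ∈ B.orthogonal W) (hzx : B z x = 0) : x ∈ B.orthogonal (W ⊔ R ∙ z) := by
  intro y hy
  obtain ⟨w, hw, _, hz, rfl⟩ := Submodule.mem_sup.1 hy
  obtain ⟨a, rfl⟩ := Submodule.mem_span_singleton.1 hz
  simp [hx w hw, hzx]

theorem sup_span_singleton_le_orthogonal (hB : B.IsRefl) {W : Submodule R V} {z : V}
    (hW : W ≤ B.orthogonal W) (hz : z ∈ B.orthogonal W) (hzz : B z z = 0) :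
    W ⊔ R ∙ z ≤ B.orthogonal (W ⊔ R ∙ z) :=
  sup_le (fun w hw => mem_orthogonal_sup_span_singleton (hW hw) (hB _ _ (hz w hw)))
    ((Submodule.span_singleton_le_iff_mem _ _).2 (mem_orthogonal_sup_span_singleton hz hzz))

variable {K : Type*} [Field K] [Module K V]

theorem IsSymm.exists_apply_smul_add_self_eq {B : LinearMap.BilinForm K V} (hB : B.IsSymm)
    (h2 : (2 : K) ≠ 0) {x e : V} (hxx : B x x = 0) (hxe : B x e ≠ 0) (t : K) :
    ∃ s : K, B (s • x + e) (s • x + e) = t := by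
  refine ⟨(t - B e e) / (2 * B x e), ?_⟩
  simp only [map_add, map_smul, LinearMap.add_apply, LinearMap.smul_apply, smul_eq_mul, hxx,
    hB.eq e x]
  field_simp
  ring

end LinearMap.BilinForm

open LinearMap.BilinForm

section Diagonal

variable {R K ι : Type*} [CommRing R] [Field K] [Fintype ι] [DecidableEq ι]

def diagForm (d : ι → R) : LinearMap.BilinForm R (ι → R) :=
  Matrix.toBilin' (Matrix.diagonal d)

theorem diagForm_apply (d x y : ι → R) : diagForm d x y = ∑ i, d i * x i * y i := by
  simp [diagForm, Matrix.toBilin'_apply', dotProduct, Matrix.mulVec_diagonal, mul_assoc,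
    mul_left_comm]

theorem isSymm_diagForm (d : ι → R) : (diagForm d).IsSymm :=
  isSymm_def.2 fun x y => by
    simp only [diagForm_apply]
    exact Finset.sum_congr rfl fun i _ => by ring

theorem diagForm_single_single (d : ι → R) (i : ι) :
    diagForm d (Pi.single i 1) (Pi.single i 1) = d i := by
  simp [diagForm]

theorem diagForm_apply_single (d x : ι → R) (i : ι) :
    diagForm d x (Pi.single i 1) = d i * x i := by
  simp [diagForm_apply, Pi.single_apply]

theorem exists_diagForm_apply_self_eq (h2 : (2 : K) ≠ 0) {d x : ι → K} (hd : ∀ i, d i ≠ 0)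
    (hx : x ≠ 0) (hxx : diagForm d x x = 0) (t : K) : ∃ y, diagForm d y y = t := by
  obtain ⟨i, hi⟩ := Function.ne_iff.1 hx
  obtain ⟨s, hs⟩ := (isSymm_diagForm d).exists_apply_smul_add_self_eq h2 hxx
    (by rw [diagForm_apply_single]; exact mul_ne_zero (hd i) hi) t
  exact ⟨_, hs⟩

end Diagonal

section Ternary

variable {K : Type*} [Field K]

/-- The norm form `⟨1, -a, -b, ab⟩` of the quaternion algebra `(a, b)` is isotropic, i.e. `(a, b)`
splits. -/
def IsotropicNormForm (a b : K) : Prop :=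
  ∃ x : Fin 4 → K, x ≠ 0 ∧ x 0 ^ 2 - a * x 1 ^ 2 - b * x 2 ^ 2 + a * b * x 3 ^ 2 = 0

theorem IsotropicNormForm.exists_ternary_eq {u v w : K} (h2 : (2 : K) ≠ 0) (hu : u ≠ 0)
    (hv : v ≠ 0) (hw : w ≠ 0) (h : IsotropicNormForm (-(u * v)) (-(u * w))) :
    ∃ y₀ y₁ y₂ : K, u * y₀ ^ 2 + v * y₁ ^ 2 + w * y₂ ^ 2 = -(u * v * w) := by
  obtain ⟨x, hx, hN⟩ := h
  -- `u • N(x₀, x₁, x₂, x₃) = ⟨u, v, w, uvw⟩(x₀, u x₁, u x₂, u x₃)`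
  by_cases hx₃ : x 3 = 0
  · rw [hx₃] at hN
    have hx' : ![x 0, u * x 1, u * x 2] ≠ 0 := by
      contrapose! hx
      ext i
      fin_cases i <;> simp_all
    obtain ⟨y, hy⟩ := exists_diagForm_apply_self_eq h2 (d := ![u, v, w])
      (fun i => by fin_cases i <;> assumption) hx'
      (by simp only [diagForm_apply, Fin.sum_univ_three, Fin.isValue, Matrix.cons_val_zero,
        Matrix.cons_val_one, Matrix.cons_val]; linear_combination u * hN)
      (-(u * v * w))
    exact ⟨y 0, y 1, y 2, by simpa [diagForm_apply, Fin.sum_univ_three, sq, mul_assoc] using hy⟩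
  · refine ⟨x 0 / (u * x 3), x 1 / x 3, x 2 / x 3, ?_⟩
    field_simp
    linear_combination hN

/-- The orthogonal complement of `y` is a binary form of discriminant `-1`, hence hyperbolic. For
`y₀ ≠ 0` it is spanned by `(v y₁, -u y₀, 0)` and `(w y₂, 0, -u y₀)`, whose Gram form is
`-uvw (A s² - 2 y₁ y₂ s t + C t²)` with `A = uv + y₂²`, `C = uw + y₁²`, `y₁² y₂² - AC = u² y₀²`;
its isotropic vectors are `(s, t) = (y₁ y₂ ± u y₀, A)`. -/
theorem exists_isotropic_orthogonal_ternary {u v w y₀ y₁ y₂ : K} (h2 : (2 : K) ≠ 0)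
    (hu : u ≠ 0) (hv : v ≠ 0) (hw : w ≠ 0)
    (hy : u * y₀ ^ 2 + v * y₁ ^ 2 + w * y₂ ^ 2 = -(u * v * w)) :
    ∃ z₀ z₁ z₂ : K, u * z₀ ^ 2 + v * z₁ ^ 2 + w * z₂ ^ 2 = 0 ∧
      u * y₀ * z₀ + v * y₁ * z₁ + w * y₂ * z₂ = 0 ∧ (z₁ ≠ 0 ∨ z₂ ≠ 0) := by
  by_cases hy₀ : y₀ = 0
  · subst hy₀
    refine ⟨v * w, w * y₂, -(v * y₁), by linear_combination v * w * hy, by ring, ?_⟩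
    by_contra! h
    have h₁ : y₁ = 0 := by simpa [hv] using h.2
    have h₂ : y₂ = 0 := by simpa [hw] using h.1
    subst h₁ h₂
    exact mul_ne_zero (mul_ne_zero hu hv) hw (by linear_combination hy)
  obtain ⟨σ, hσ, hst⟩ : ∃ σ : K, σ ^ 2 = 1 ∧ (y₁ * y₂ + σ * u * y₀ ≠ 0 ∨ u * v + y₂ ^ 2 ≠ 0) := by
    by_contra! h
    have hplus := (h 1 (one_pow 2)).1
    have hminus := (h (-1) (by ring)).1
    exact mul_ne_zero (mul_ne_zero h2 hu) hy₀ (by linear_combination hplus - hminus)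
  set s := y₁ * y₂ + σ * u * y₀
  set t := u * v + y₂ ^ 2
  refine ⟨v * y₁ * s + w * y₂ * t, -(u * y₀ * s), -(u * y₀ * t), ?_, by ring, ?_⟩
  · linear_combination (u * (v * s ^ 2 + w * t ^ 2) - u ^ 2 * v * w * t) * hy
      - u ^ 3 * v * w * t * y₀ ^ 2 * hσ
  · simpa [hu, hy₀] using hst

end Ternary

section Coordinates

variable {R : Type*} [CommRing R] {n : ℕ}

variable (R n) in
def lowCoords (m : ℕ) : Submodule R (Fin n → R) :=
  Submodule.pi {l : Fin n | m ≤ l} fun _ => ⊥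

theorem mem_lowCoords {m : ℕ} {x : Fin n → R} :
    x ∈ lowCoords R n m ↔ ∀ l : Fin n, m ≤ l → x l = 0 := by
  simp [lowCoords, Submodule.mem_pi]

theorem lowCoords_mono {m m' : ℕ} (h : m ≤ m') : lowCoords R n m ≤ lowCoords R n m' :=
  fun _ hx => mem_lowCoords.2 fun l hl => mem_lowCoords.1 hx l (h.trans hl)

theorem single_mem_lowCoords {m : ℕ} {l : Fin n} (hl : (l : ℕ) < m) :
    Pi.single l (1 : R) ∈ lowCoords R n m :=
  mem_lowCoords.2 fun l' hl' => Pi.single_eq_of_ne (by omega) _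

theorem single_mem_orthogonal_lowCoords (d : Fin n → R) {m : ℕ} {l : Fin n} (hl : m ≤ l) :
    Pi.single l 1 ∈ (diagForm d).orthogonal (lowCoords R n m) := fun x hx => by
  rw [diagForm_apply_single, mem_lowCoords.1 hx l hl, mul_zero]

end Coordinates

section SignedDisc

open Finset

variable {R : Type*} [CommRing R] (d : ℕ → R)

def signedDisc (j : ℕ) : R := (-1) ^ j * ∏ i ∈ range (2 * j + 1), d i

theorem signedDisc_zero : signedDisc d 0 = d 0 := by simp [signedDisc]

theorem signedDisc_succ (j : ℕ) :
    signedDisc d (j + 1) = -(signedDisc d j * d (2 * j + 1) * d (2 * j + 2)) := by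
  simp only [signedDisc, show 2 * (j + 1) + 1 = 2 * j + 1 + 1 + 1 by ring, prod_range_succ,
    pow_succ]
  ring

theorem neg_signedDisc_mul (j : ℕ) :
    -(signedDisc d j * d (2 * j + 1)) = (-1) ^ (j + 1) * ∏ i ∈ range (2 * (j + 1)), d i := by
  simp only [signedDisc, show 2 * (j + 1) = 2 * j + 1 + 1 by ring, prod_range_succ, pow_succ]
  ring

theorem map_signedDisc {S : Type*} [CommRing S] (φ : R →+* S) (j : ℕ) :
    φ (signedDisc d j) = signedDisc (fun i => φ (d i)) j := by
  simp [signedDisc, map_prod]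

variable {d}

theorem signedDisc_ne_zero [IsDomain R] (hd : ∀ i, d i ≠ 0) (j : ℕ) : signedDisc d j ≠ 0 :=
  mul_ne_zero (pow_ne_zero _ (neg_ne_zero.2 one_ne_zero)) (prod_ne_zero_iff.2 fun i _ => hd i)

end SignedDisc

section WittStages

variable {K : Type*} [Field K] {d : ℕ → K} {n : ℕ}

/-- `W` and `p` exhibit `⟨d₀, …, d_{2j}⟩ ≅ j·H ⊥ ⟨δⱼ⟩` inside the first `2j + 1` coordinates. -/
def IsWittStage (d : ℕ → K) (j : ℕ) (W : Submodule K (Fin n → K)) (p : Fin n → K) : Prop :=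
  finrank K W = j ∧ W ≤ (diagForm (d ∘ Fin.val)).orthogonal W ∧
    W ≤ lowCoords K n (2 * j + 1) ∧ p ∈ lowCoords K n (2 * j + 1) ∧
    p ∈ (diagForm (d ∘ Fin.val)).orthogonal W ∧ diagForm (d ∘ Fin.val) p p = signedDisc d j

theorem isWittStage_zero (hn : 0 < n) : IsWittStage d 0 ⊥ (Pi.single ⟨0, hn⟩ 1) := by
  refine ⟨finrank_bot K _, bot_le, bot_le, single_mem_lowCoords (by simp), by simp, ?_⟩
  rw [diagForm_single_single, signedDisc_zero]
  rfl

variable {j : ℕ} {W : Submodule K (Fin n → K)} {p : Fin n → K} {i₁ i₂ : Fin n}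

theorem IsWittStage.sup_span_singleton (hW : IsWittStage d j W p) {Z P : Fin n → K}
    (hZ : Z ∈ lowCoords K n (2 * (j + 1) + 1) ⊓ (diagForm (d ∘ Fin.val)).orthogonal W)
    (hP : P ∈ lowCoords K n (2 * (j + 1) + 1) ⊓ (diagForm (d ∘ Fin.val)).orthogonal W)
    (hZW : Z ∉ W) (hZZ : diagForm (d ∘ Fin.val) Z Z = 0)
    (hZP : diagForm (d ∘ Fin.val) Z P = 0)
    (hPP : diagForm (d ∘ Fin.val) P P = signedDisc d (j + 1)) :
    IsWittStage d (j + 1) (W ⊔ K ∙ Z) P := by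
  obtain ⟨hdim, hWW, hWlow, -, -, -⟩ := hW
  exact ⟨by rw [Submodule.finrank_sup_span_singleton hZW, hdim],
    sup_span_singleton_le_orthogonal (isSymm_diagForm _).isRefl hWW hZ.2 hZZ,
    sup_le (hWlow.trans (lowCoords_mono (by omega)))
      ((Submodule.span_singleton_le_iff_mem _ _).2 hZ.1),
    hP.1, mem_orthogonal_sup_span_singleton hP.2 hZP, hPP⟩

theorem IsWittStage.apply_smul_add_smul_add_smul (h₁ : (i₁ : ℕ) = 2 * j + 1)
    (h₂ : (i₂ : ℕ) = 2 * j + 2) (hW : IsWittStage d j W p) (a b c a' b' c' : K) :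
    diagForm (d ∘ Fin.val) (a • p + b • Pi.single i₁ 1 + c • Pi.single i₂ 1)
        (a' • p + b' • Pi.single i₁ 1 + c' • Pi.single i₂ 1) =
      a * a' * signedDisc d j + b * b' * d (2 * j + 1) + c * c' * d (2 * j + 2) := by
  obtain ⟨-, -, -, hplow, -, hpp⟩ := hW
  have he₁ := single_mem_orthogonal_lowCoords (d ∘ Fin.val) (m := 2 * j + 1) h₁.ge
  have he₂ := single_mem_orthogonal_lowCoords (d ∘ Fin.val) (m := 2 * j + 2) h₂.ge
  rw [(isSymm_diagForm _).apply_smul_add_smul_add_smul (he₁ p hplow)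
    (he₂ p (lowCoords_mono (by omega) hplow)) (he₂ _ (single_mem_lowCoords (by omega))), hpp,
    diagForm_single_single, diagForm_single_single, Function.comp_apply, Function.comp_apply,
    h₁, h₂]

theorem IsWittStage.smul_add_smul_add_smul_mem (h₁ : (i₁ : ℕ) = 2 * j + 1)
    (h₂ : (i₂ : ℕ) = 2 * j + 2) (hW : IsWittStage d j W p) (a b c : K) :
    a • p + b • Pi.single i₁ 1 + c • Pi.single i₂ 1 ∈
      lowCoords K n (2 * (j + 1) + 1) ⊓ (diagForm (d ∘ Fin.val)).orthogonal W := by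
  obtain ⟨-, -, hWlow, hplow, hpW, -⟩ := hW
  have hmem : ∀ i : Fin n, 2 * j + 1 ≤ i → (i : ℕ) < 2 * (j + 1) + 1 →
      Pi.single i 1 ∈ lowCoords K n (2 * (j + 1) + 1) ⊓ (diagForm (d ∘ Fin.val)).orthogonal W :=
    fun i hi hi' => ⟨single_mem_lowCoords hi',
      orthogonal_le hWlow (single_mem_orthogonal_lowCoords _ hi)⟩
  exact add_mem (add_mem (Submodule.smul_mem _ a ⟨lowCoords_mono (by omega) hplow, hpW⟩)
    (Submodule.smul_mem _ b (hmem i₁ (by omega) (by omega))))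
    (Submodule.smul_mem _ c (hmem i₂ (by omega) (by omega)))

theorem IsWittStage.smul_add_smul_add_smul_notMem (h₁ : (i₁ : ℕ) = 2 * j + 1)
    (h₂ : (i₂ : ℕ) = 2 * j + 2) (hW : IsWittStage d j W p) {a b c : K}
    (hbc : b ≠ 0 ∨ c ≠ 0) : a • p + b • Pi.single i₁ 1 + c • Pi.single i₂ 1 ∉ W := by
  obtain ⟨-, -, hWlow, hplow, -, -⟩ := hW
  intro hmem
  have hne : i₁ ≠ i₂ := Fin.ne_of_val_ne (by omega)
  have hb := mem_lowCoords.1 (hWlow hmem) i₁ h₁.ge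
  have hc := mem_lowCoords.1 (hWlow hmem) i₂ (by omega)
  simp [mem_lowCoords.1 hplow i₁ h₁.ge, mem_lowCoords.1 hplow i₂ (by omega), hne, hne.symm]
    at hb hc
  tauto

theorem IsWittStage.succ (h2 : (2 : K) ≠ 0) (hd : ∀ i, d i ≠ 0) (hj : 2 * j + 3 ≤ n)
    (hsplit : IsotropicNormForm (-(signedDisc d j * d (2 * j + 1)))
      (-(signedDisc d j * d (2 * j + 2))))
    (hW : IsWittStage d j W p) :
    ∃ (W' : Submodule K (Fin n → K)) (p' : Fin n → K), IsWittStage d (j + 1) W' p' := by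
  obtain ⟨y₀, y₁, y₂, hy⟩ :=
    hsplit.exists_ternary_eq h2 (signedDisc_ne_zero hd j) (hd _) (hd _)
  obtain ⟨z₀, z₁, z₂, hzz, hyz, hz⟩ :=
    exists_isotropic_orthogonal_ternary h2 (signedDisc_ne_zero hd j) (hd _) (hd _) hy
  have h₁ : ((⟨2 * j + 1, by omega⟩ : Fin n) : ℕ) = 2 * j + 1 := rfl
  have h₂ : ((⟨2 * j + 2, by omega⟩ : Fin n) : ℕ) = 2 * j + 2 := rfl
  refine ⟨_, _, hW.sup_span_singleton (hW.smul_add_smul_add_smul_mem h₁ h₂ z₀ z₁ z₂)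
    (hW.smul_add_smul_add_smul_mem h₁ h₂ y₀ y₁ y₂) (hW.smul_add_smul_add_smul_notMem h₁ h₂ hz)
    ?_ ?_ ?_⟩ <;> rw [hW.apply_smul_add_smul_add_smul h₁ h₂]
  · linear_combination hzz
  · linear_combination hyz
  · linear_combination hy - signedDisc_succ d j

theorem exists_isWittStage (h2 : (2 : K) ≠ 0) (hd : ∀ i, d i ≠ 0) :
    ∀ j, 2 * j + 1 ≤ n →
      (∀ i < j, IsotropicNormForm (-(signedDisc d i * d (2 * i + 1)))
        (-(signedDisc d i * d (2 * i + 2)))) →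
      ∃ (W : Submodule K (Fin n → K)) (p : Fin n → K), IsWittStage d j W p
  | 0, hn, _ => ⟨_, _, isWittStage_zero hn⟩
  | j + 1, hn, hsplit =>
    have ⟨_, _, hW⟩ := exists_isWittStage h2 hd j (by omega) fun i hi => hsplit i (by omega)
    hW.succ h2 hd (by omega) (hsplit j j.lt_succ_self)

theorem IsWittStage.exists_le_orthogonal (hd : ∀ i, d i ≠ 0) (hj : 2 * j + 2 ≤ n)
    (hsq : IsSquare ((-1) ^ (j + 1) * ∏ i ∈ Finset.range (2 * (j + 1)), d i))
    (hW : IsWittStage d j W p) :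
    ∃ W' : Submodule K (Fin n → K),
      finrank K W' = j + 1 ∧ W' ≤ (diagForm (d ∘ Fin.val)).orthogonal W' := by
  obtain ⟨hdim, hWW, hWlow, hplow, hpW, hpp⟩ := hW
  obtain ⟨r, hr⟩ := hsq
  rw [← neg_signedDisc_mul] at hr
  set B := diagForm (d ∘ Fin.val : Fin n → K)
  let i : Fin n := ⟨2 * j + 1, by omega⟩
  set e : Fin n → K := Pi.single i 1
  have he : e ∈ B.orthogonal (lowCoords K n (2 * j + 1)) :=
    single_mem_orthogonal_lowCoords _ le_rfl
  have hee : B e e = d (2 * j + 1) := diagForm_single_single _ _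
  have hr₀ : r ≠ 0 := by
    rintro rfl
    exact neg_ne_zero.2 (mul_ne_zero (signedDisc_ne_zero hd j) (hd _)) (by simpa using hr)
  set Z := d (2 * j + 1) • p + r • e
  have hZW : Z ∉ W := fun hZ => by
    have h := mem_lowCoords.1 (hWlow hZ) i le_rfl
    simp [Z, e, mem_lowCoords.1 hplow i le_rfl] at h
    exact hr₀ h
  refine ⟨W ⊔ K ∙ Z, by rw [Submodule.finrank_sup_span_singleton hZW, hdim],
    sup_span_singleton_le_orthogonal (isSymm_diagForm _).isRefl hWW
      (add_mem (Submodule.smul_mem _ _ hpW) (Submodule.smul_mem _ _ (orthogonal_le hWlow he))) ?_⟩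
  have hpe : B p e = 0 := he p hplow
  have hep : B e p = 0 := (isSymm_diagForm _).isRefl _ _ hpe
  simp only [Z, map_add, map_smul, LinearMap.add_apply, LinearMap.smul_apply, smul_eq_mul, hpe,
    hep, hpp, hee]
  linear_combination -d (2 * j + 1) * hr

theorem exists_le_orthogonal_of_isotropicNormForm (h2 : (2 : K) ≠ 0) (hd : ∀ i, d i ≠ 0)
    (k : ℕ) (hsplit : ∀ i < k - 1, IsotropicNormForm (-(signedDisc d i * d (2 * i + 1)))
      (-(signedDisc d i * d (2 * i + 2))))
    (hsq : IsSquare ((-1) ^ k * ∏ i ∈ Finset.range (2 * k), d i)) :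
    ∃ W : Submodule K (Fin (2 * k) → K),
      finrank K W = k ∧ W ≤ (diagForm (d ∘ Fin.val)).orthogonal W := by
  cases k with
  | zero => exact ⟨⊥, finrank_bot K _, bot_le⟩
  | succ j =>
    obtain ⟨W, p, hW⟩ := exists_isWittStage (n := 2 * (j + 1)) h2 hd j (by omega)
      fun i hi => hsplit i (by omega)
    exact hW.exists_le_orthogonal hd (by omega) hsq

end WittStages

/-- let `F` be a field of characteristic not 2 such that over every finite
extension `L` of `F`, any finite collection of 2-torsion Brauer classes (quaternion classes
`(aᵢ, bᵢ)`) can be split simultaneously by an extension of degree at most `D`.  Then every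
even-dimensional quadratic form over `F` with trivial signed discriminant achieves maximal
Witt index over an extension of degree at most `D`. -/
theorem split_even_form_with_trivial_discriminant
    (F : Type u) [Field F] (hF : ringChar F ≠ 2) (D : ℕ)
    (hyp : ∀ (L : Type u) [Field L] [Algebra F L], FiniteDimensional F L →
      ∀ (m : ℕ) (a b : Fin m → L), (∀ i, a i ≠ 0) → (∀ i, b i ≠ 0) →
        Nonempty (QuatSplitExt L m a b D)) :
    ∀ (k : ℕ) (c : Fin (2 * k) → F), (∀ i, c i ≠ 0) →
      IsSquare ((-1 : F) ^ k * ∏ i, c i) →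
      Nonempty (SplitExt F (2 * k) c D) := by
  intro k c hc hsq
  set c' : ℕ → F := fun i => if h : i < 2 * k then c ⟨i, h⟩ else 1
  have hc' : ∀ i, c' i ≠ 0 := fun i => by
    simp only [c']
    split_ifs
    exacts [hc _, one_ne_zero]
  obtain ⟨Q⟩ := hyp F inferInstance (k - 1) (fun i => -(signedDisc c' i * c' (2 * i + 1)))
    (fun i => -(signedDisc c' i * c' (2 * i + 2)))
    (fun i => neg_ne_zero.2 (mul_ne_zero (signedDisc_ne_zero hc' i) (hc' _)))
    (fun i => neg_ne_zero.2 (mul_ne_zero (signedDisc_ne_zero hc' i) (hc' _)))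
  let _ := Q.fieldM
  let _ := Q.algM
  set φ := algebraMap F Q.M
  have h2 : (2 : Q.M) ≠ 0 := by
    simpa only [map_ofNat] using (map_ne_zero φ).2 (Ring.two_ne_zero hF)
  have hprod : ∏ i ∈ Finset.range (2 * k), φ (c' i) = φ (∏ i, c i) := by
    rw [map_prod, ← Fin.prod_univ_eq_prod_range]
    simp [c']
  obtain ⟨W, hWdim, hWW⟩ := exists_le_orthogonal_of_isotropicNormForm h2
    (fun i => (map_ne_zero φ).2 (hc' i)) k
    (fun i hi => by simpa [IsotropicNormForm, map_signedDisc] using Q.splits ⟨i, hi⟩)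
    (by simpa [hprod] using hsq.map φ)
  refine ⟨⟨Q.M, Q.finite, Q.deg_le, W, fun x hx => ?_, by rw [hWdim]; omega⟩⟩
  simpa [diagForm_apply, c', sq, mul_assoc] using hWW hx x hx
end
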